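/- Let ψ ∈ ℝ, and D_ε[ψ](r,t) = −(2ψ/(r√π)) ∫₀ᵗ e^{-s} ∫₀^{(r−1)√ε/(2√(t−s))} e^{-z²} dz ds for r > 1, t > 0, ε > 0. Then there exists C > 0 (independent of ψ, r, t, ε) such that |∂_r D_ε[ψ](r,t)| ≤ C√(εt) |ψ|. -/

import Mathlib

/-!
Write `D_ε[ψ](r, t) = A(r) · J(r - 1)` with `A(r) = -2ψ / (r √π)` and
`J(x) = ∫₀ᵗ e^{-s} E(x k(s)) ds`, where `E(a) = ∫₀ᵃ e^{-z²} dz` and `k(s) = √ε / (2 √(t - s))`.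
Because `|E'| ≤ 1` and `|E(a)| ≤ |a|`, one may differentiate `J` under the integral sign, and
`|J(x)| ≤ |x| ∫₀ᵗ k`, `|J'(x)| ≤ ∫₀ᵗ k`, where `∫₀ᵗ k = √(εt)` is finite because the singularity
`(t - s)^{-1/2}` is integrable. The product rule then gives
`|∂_r D| ≤ 2|ψ| ((r - 1) / r² + 1 / r) √(εt) ≤ 4 |ψ| √(εt)`.
-/

open Real MeasureTheory

/-- The Duhamel term for constant boundary data in the exterior-ball problem. -/
noncomputable def De (ψ ε r t : ℝ) : ℝ :=
  -(2 * ψ / (r * Real.sqrt π)) *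
    ∫ s in (0:ℝ)..t, Real.exp (-s) *
      ∫ z in (0:ℝ)..((r - 1) * Real.sqrt ε / (2 * Real.sqrt (t - s))), Real.exp (-z ^ 2)

open intervalIntegral
open scoped Interval

noncomputable def gaussPrimitive (a : ℝ) : ℝ := ∫ z in (0:ℝ)..a, exp (-z ^ 2)

lemma continuous_exp_neg_sq : Continuous fun z : ℝ => exp (-z ^ 2) := by fun_prop

lemma exp_neg_sq_le_one (z : ℝ) : exp (-z ^ 2) ≤ 1 :=
  exp_le_one_iff.2 (neg_nonpos.2 (sq_nonneg z))

lemma hasDerivAt_gaussPrimitive (a : ℝ) : HasDerivAt gaussPrimitive (exp (-a ^ 2)) a :=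
  (continuous_exp_neg_sq.integral_hasStrictDerivAt 0 a).hasDerivAt

lemma continuous_gaussPrimitive : Continuous gaussPrimitive :=
  continuous_iff_continuousAt.2 fun a => (hasDerivAt_gaussPrimitive a).continuousAt

lemma abs_gaussPrimitive_le (a : ℝ) : |gaussPrimitive a| ≤ |a| := by
  have h := norm_integral_le_of_norm_le_const (a := 0) (b := a) (C := 1)
    (f := fun z => exp (-z ^ 2)) fun z _ => by
      rw [norm_of_nonneg (exp_pos _).le]; exact exp_neg_sq_le_one z
  simpa [gaussPrimitive] using h

section WeightedGaussPrimitive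

variable {w k : ℝ → ℝ} {a b : ℝ}

lemma abs_mul_gaussPrimitive_mul_le (hw : ∀ s ∈ Ι a b, |w s| ≤ 1) (x : ℝ) :
    ∀ s ∈ Ι a b, ‖w s * gaussPrimitive (x * k s)‖ ≤ |x| * |k s| := fun s hs =>
  calc ‖w s * gaussPrimitive (x * k s)‖ = |w s| * |gaussPrimitive (x * k s)| := abs_mul _ _
    _ ≤ 1 * |x * k s| := mul_le_mul (hw s hs) (abs_gaussPrimitive_le _) (abs_nonneg _) zero_le_one
    _ = |x| * |k s| := by rw [one_mul, abs_mul]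

lemma abs_mul_exp_neg_sq_mul_le (hw : ∀ s ∈ Ι a b, |w s| ≤ 1) (x : ℝ) :
    ∀ s ∈ Ι a b, ‖w s * (exp (-(x * k s) ^ 2) * k s)‖ ≤ |k s| := fun s hs =>
  calc ‖w s * (exp (-(x * k s) ^ 2) * k s)‖ = |w s| * (exp (-(x * k s) ^ 2) * |k s|) := by
        rw [Real.norm_eq_abs, abs_mul, abs_mul, abs_of_pos (exp_pos _)]
    _ ≤ 1 * (1 * |k s|) := by
        gcongr
        exacts [hw s hs, exp_neg_sq_le_one _]
    _ = |k s| := by ring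

theorem hasDerivAt_integral_mul_gaussPrimitive_mul
    (hw_meas : AEStronglyMeasurable w (volume.restrict (Ι a b)))
    (hw : ∀ s ∈ Ι a b, |w s| ≤ 1) (hk : IntervalIntegrable k volume a b) (x : ℝ) :
    HasDerivAt (fun y => ∫ s in a..b, w s * gaussPrimitive (y * k s))
      (∫ s in a..b, w s * (exp (-(x * k s) ^ 2) * k s)) x := by
  have hk_meas : AEStronglyMeasurable k (volume.restrict (Ι a b)) := hk.def'.aestronglyMeasurable
  have hF_meas (y : ℝ) :
      AEStronglyMeasurable (fun s => w s * gaussPrimitive (y * k s)) (volume.restrict (Ι a b)) :=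
    hw_meas.mul (continuous_gaussPrimitive.comp_aestronglyMeasurable (hk_meas.const_mul y))
  have hF'_meas : AEStronglyMeasurable (fun s => w s * (exp (-(x * k s) ^ 2) * k s))
      (volume.restrict (Ι a b)) :=
    hw_meas.mul ((continuous_exp_neg_sq.comp_aestronglyMeasurable (hk_meas.const_mul x)).mul
      hk_meas)
  have hF_int : IntervalIntegrable (fun s => w s * gaussPrimitive (x * k s)) volume a b :=
    (hk.abs.const_mul |x|).mono_fun' (hF_meas x) <|
      (ae_restrict_iff' measurableSet_uIoc).2 (ae_of_all _ (abs_mul_gaussPrimitive_mul_le hw x))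
  have hF_deriv (s y : ℝ) : HasDerivAt (fun y => w s * gaussPrimitive (y * k s))
      (w s * (exp (-(y * k s) ^ 2) * k s)) y :=
    ((hasDerivAt_gaussPrimitive _).comp y ((hasDerivAt_id y).mul_const (k s))).const_mul (w s)
      |>.congr_deriv (by simp)
  exact (hasDerivAt_integral_of_dominated_loc_of_deriv_le (bound := fun s => |k s|)
    Filter.univ_mem (Filter.Eventually.of_forall hF_meas) hF_int hF'_meas
    (ae_of_all _ fun s hs y _ => abs_mul_exp_neg_sq_mul_le hw y s hs) hk.abs
    (ae_of_all _ fun s _ y _ => hF_deriv s y)).2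

lemma abs_integral_mul_gaussPrimitive_mul_le (hw : ∀ s ∈ Ι a b, |w s| ≤ 1)
    (hk : IntervalIntegrable k volume a b) (x : ℝ) :
    |∫ s in a..b, w s * gaussPrimitive (x * k s)| ≤ |x| * |(∫ s in a..b, |k s|)| := by
  rw [← abs_abs x, ← abs_mul, ← intervalIntegral.integral_const_mul]
  exact norm_integral_le_abs_of_norm_le
    ((ae_restrict_iff' measurableSet_uIoc).2 (ae_of_all _ (abs_mul_gaussPrimitive_mul_le hw x)))
    (hk.abs.const_mul _)

lemma abs_integral_mul_exp_neg_sq_mul_le (hw : ∀ s ∈ Ι a b, |w s| ≤ 1)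
    (hk : IntervalIntegrable k volume a b) (x : ℝ) :
    |∫ s in a..b, w s * (exp (-(x * k s) ^ 2) * k s)| ≤ |(∫ s in a..b, |k s|)| :=
  norm_integral_le_abs_of_norm_le
    ((ae_restrict_iff' measurableSet_uIoc).2 (ae_of_all _ (abs_mul_exp_neg_sq_mul_le hw x))) hk.abs

end WeightedGaussPrimitive

section InverseSquareRoot

variable {t : ℝ}

lemma inv_sqrt_eqOn_rpow (ht : 0 ≤ t) :
    Set.EqOn (fun u => (√u)⁻¹) (fun u => u ^ (-(1 / 2) : ℝ)) [[0, t]] := fun u hu => by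
  rw [Set.uIcc_of_le ht] at hu
  simp only [sqrt_eq_rpow, rpow_neg hu.1]

lemma intervalIntegrable_inv_sqrt (ht : 0 ≤ t) :
    IntervalIntegrable (fun u => (√u)⁻¹) volume 0 t :=
  (intervalIntegrable_congr ((inv_sqrt_eqOn_rpow ht).mono Set.uIoc_subset_uIcc)).2
    (intervalIntegrable_rpow' (by norm_num))

lemma integral_inv_sqrt (ht : 0 ≤ t) : ∫ u in (0:ℝ)..t, (√u)⁻¹ = 2 * √t := by
  rw [integral_congr (inv_sqrt_eqOn_rpow ht), integral_rpow (Or.inl (by norm_num)), sqrt_eq_rpow]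
  norm_num
  ring

lemma intervalIntegrable_inv_sqrt_sub (ht : 0 ≤ t) :
    IntervalIntegrable (fun s => (√(t - s))⁻¹) volume 0 t := by
  simpa using ((intervalIntegrable_inv_sqrt ht).comp_sub_left t).symm

lemma integral_inv_sqrt_sub (ht : 0 ≤ t) : ∫ s in (0:ℝ)..t, (√(t - s))⁻¹ = 2 * √t := by
  have h := integral_comp_sub_left (fun u => (√u)⁻¹) t (a := 0) (b := t)
  rw [sub_self, sub_zero] at h
  rw [h, integral_inv_sqrt ht]

end InverseSquareRoot

noncomputable def duhamelRate (ε t s : ℝ) : ℝ := √ε / (2 * √(t - s))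

lemma duhamelRate_nonneg (ε t s : ℝ) : 0 ≤ duhamelRate ε t s := by
  unfold duhamelRate; positivity

lemma duhamelRate_eq (ε t s : ℝ) : duhamelRate ε t s = √ε / 2 * (√(t - s))⁻¹ := by
  rw [duhamelRate, ← div_div, div_eq_mul_inv]

lemma intervalIntegrable_duhamelRate (ε : ℝ) {t : ℝ} (ht : 0 ≤ t) :
    IntervalIntegrable (duhamelRate ε t) volume 0 t := by
  rw [show duhamelRate ε t = _ from funext (duhamelRate_eq ε t)]
  exact (intervalIntegrable_inv_sqrt_sub ht).const_mul (√ε / 2)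

lemma integral_duhamelRate {ε t : ℝ} (hε : 0 ≤ ε) (ht : 0 ≤ t) :
    ∫ s in (0:ℝ)..t, duhamelRate ε t s = √(ε * t) := by
  simp only [duhamelRate_eq, intervalIntegral.integral_const_mul, integral_inv_sqrt_sub ht,
    sqrt_mul hε]
  ring

lemma De_eq (ψ ε r t : ℝ) : De ψ ε r t = -(2 * ψ / (r * √π)) *
    ∫ s in (0:ℝ)..t, exp (-s) * gaussPrimitive ((r - 1) * duhamelRate ε t s) := by
  simp only [De, gaussPrimitive, duhamelRate, mul_div_assoc]

lemma hasDerivAt_neg_div_mul_sqrt_pi (ψ : ℝ) {r : ℝ} (hr : r ≠ 0) :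
    HasDerivAt (fun r => -(2 * ψ / (r * √π))) (2 * ψ / (r ^ 2 * √π)) r := by
  rw [show (fun r => -(2 * ψ / (r * √π))) = fun r => -(2 * ψ / √π) * r⁻¹ from
    funext fun r => by ring]
  exact ((hasDerivAt_inv hr).const_mul _).congr_deriv (by ring)

lemma abs_deriv_prefactor_mul_add_le {ψ r J J' X : ℝ} (hr : 1 ≤ r) (hJ : |J| ≤ |r - 1| * X)
    (hJ' : |J'| ≤ X) : |2 * ψ / (r ^ 2 * √π) * J + -(2 * ψ / (r * √π)) * J'| ≤ 4 * X * |ψ| := by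
  have hπ : 1 ≤ √π := one_le_sqrt.2 (by linarith [pi_gt_three])
  have hX : 0 ≤ X := (abs_nonneg _).trans hJ'
  rw [abs_of_nonneg (by linarith : 0 ≤ r - 1)] at hJ
  have h1 : |2 * ψ / (r ^ 2 * √π)| * (r - 1) ≤ 2 * |ψ| := by
    rw [abs_div, abs_mul, abs_two, abs_of_pos (by positivity : 0 < r ^ 2 * √π), div_mul_eq_mul_div,
      div_le_iff₀ (by positivity)]
    have : r - 1 ≤ r ^ 2 * √π := by nlinarith
    exact mul_le_mul_of_nonneg_left this (by positivity)
  have h2 : |-(2 * ψ / (r * √π))| ≤ 2 * |ψ| := by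
    rw [abs_neg, abs_div, abs_mul, abs_two, abs_of_pos (by positivity : 0 < r * √π),
      div_le_iff₀ (by positivity)]
    exact le_mul_of_one_le_right (by positivity) (one_le_mul_of_one_le_of_one_le hr hπ)
  calc _ ≤ |2 * ψ / (r ^ 2 * √π)| * |J| + |-(2 * ψ / (r * √π))| * |J'| := by
        rw [← abs_mul, ← abs_mul]; exact abs_add_le _ _
    _ ≤ |2 * ψ / (r ^ 2 * √π)| * ((r - 1) * X) + 2 * |ψ| * X := by gcongr
    _ ≤ 2 * |ψ| * X + 2 * |ψ| * X := by rw [← mul_assoc]; gcongr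
    _ = 4 * X * |ψ| := by ring

theorem stmt_10 :
    ∃ C : ℝ, 0 < C ∧ ∀ ψ r t ε : ℝ, 1 < r → 0 < t → 0 < ε →
      |deriv (fun r' => De ψ ε r' t) r| ≤ C * Real.sqrt (ε * t) * |ψ| := by
  refine ⟨4, by norm_num, fun ψ r t ε hr ht hε => ?_⟩
  have hk := intervalIntegrable_duhamelRate ε ht.le
  have hw : ∀ s ∈ Ι 0 t, |exp (-s)| ≤ 1 := fun s hs => by
    rw [abs_of_pos (exp_pos _), exp_le_one_iff, neg_nonpos]
    exact (Set.uIoc_of_le ht.le ▸ hs).1.le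
  have hw_meas : AEStronglyMeasurable (fun s => exp (-s)) (volume.restrict (Ι 0 t)) :=
    (continuous_exp.comp continuous_neg).aestronglyMeasurable
  have hk_abs : |(∫ s in (0:ℝ)..t, |duhamelRate ε t s|)| = √(ε * t) := by
    simp only [abs_of_nonneg (duhamelRate_nonneg _ _ _), integral_duhamelRate hε.le ht.le,
      abs_of_nonneg (sqrt_nonneg _)]
  have hJ := (hasDerivAt_integral_mul_gaussPrimitive_mul hw_meas hw hk (r - 1)).comp_sub_const r 1
  have hD := (hasDerivAt_neg_div_mul_sqrt_pi ψ (by linarith : r ≠ 0)).fun_mul hJ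
  simp only [De_eq]
  rw [hD.deriv]
  exact abs_deriv_prefactor_mul_add_le hr.le
    (hk_abs ▸ abs_integral_mul_gaussPrimitive_mul_le hw hk (r - 1))
    (hk_abs ▸ abs_integral_mul_exp_neg_sq_mul_le hw hk (r - 1))
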